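/- arXiv:math-ph/0406005 — 3 statements merged into one kernel-verified Lean document; each statement's English description precedes it below -/
import Mathlib

section
/- Let n ≥ 1, let v₁, …, vₙ be distinct points of ℝ³, and let Ω₁, …, Ωₙ be real numbers, not all zero, with Σₐ Ωₐ = 0. Let S = { y ∈ ℝⁿ : |yₐ − y_b| ≤ ‖vₐ − v_b‖ for all a, b }. Then there exists y* ∈ S with y*₁ = 0 such that Σₐ Ωₐ yₐ ≤ Σₐ Ωₐ y*ₐ for every y ∈ S, and moreover Σₐ Ωₐ y*ₐ > 0. -/
/-!
Normalising `y₁ = 0` cuts the feasible set down to a closed subset of the box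
`∏ₐ [-‖vₐ - v₁‖, ‖vₐ - v₁‖]`, hence to a compact set, on which the linear functional attains its
maximum; since `Σₐ Ωₐ = 0`, translating `y` by a constant does not change the functional, so this
is also the maximum over the whole feasible set. For positivity, pick `a₀` with `Ωₐ₀ ≠ 0`: a bump
`±δ` at `a₀`, with `δ > 0` below every distance between distinct points, is feasible and has value
`±Ωₐ₀ δ`.
-/

open Filter Topology

variable {ι : Type*}

/-- For `d a b = ‖vₐ - v_b‖` this is the feasible set `S`. -/
def lipschitzSet (d : ι → ι → ℝ) : Set (ι → ℝ) :=
  {y | ∀ a b, |y a - y b| ≤ d a b}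

namespace lipschitzSet

variable {d : ι → ι → ℝ}

theorem zero_mem (hd : ∀ a b, 0 ≤ d a b) : (0 : ι → ℝ) ∈ lipschitzSet d := fun a b => by
  simpa using hd a b

theorem sub_const_mem {y : ι → ℝ} (hy : y ∈ lipschitzSet d) (c : ℝ) :
    y - Function.const ι c ∈ lipschitzSet d := fun a b => by
  simpa using hy a b

theorem single_mem [DecidableEq ι] (hd : ∀ a b, 0 ≤ d a b) {i : ι} {c : ℝ}
    (hc : ∀ a b, a ≠ b → |c| ≤ d a b) : Pi.single i c ∈ lipschitzSet d := by
  intro a b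
  by_cases hab : a = b
  · simpa [hab] using hd b b
  · refine le_trans ?_ (hc a b hab)
    simp only [Pi.single_apply]
    split_ifs <;> simp_all

theorem isClosed : IsClosed (lipschitzSet d) := by
  simp only [lipschitzSet, Set.ofPred_forall]
  exact isClosed_iInter fun a => isClosed_iInter fun b =>
    isClosed_le (by fun_prop) continuous_const

theorem isCompact_inter_eval_eq_zero (i₀ : ι) :
    IsCompact (lipschitzSet d ∩ {y | y i₀ = 0}) := by
  refine (isCompact_univ_pi fun a => isCompact_Icc (a := -d a i₀) (b := d a i₀)).of_isClosed_subset
    (isClosed.inter (isClosed_eq (continuous_apply i₀) continuous_const)) ?_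
  rintro y ⟨hy, hy₀⟩ a -
  have hya := hy a i₀
  rw [hy₀, sub_zero] at hya
  exact abs_le.1 hya

end lipschitzSet

theorem exists_pos_le_of_pos_of_ne [Finite ι] {d : ι → ι → ℝ} (hd : ∀ a b, a ≠ b → 0 < d a b) :
    ∃ δ > 0, ∀ a b, a ≠ b → δ ≤ d a b := by
  have h : ∀ᶠ δ in 𝓝[>] (0 : ℝ), ∀ a b, a ≠ b → δ ≤ d a b :=
    eventually_all.2 fun a => eventually_all.2 fun b => eventually_imp_distrib_left.2 fun hab =>
      nhdsWithin_le_nhds (eventually_le_nhds (hd a b hab))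
  obtain ⟨δ, hδd, hδ⟩ := (h.and self_mem_nhdsWithin).exists
  exact ⟨δ, hδ, hδd⟩

theorem dotProduct_sub_const_of_sum_eq_zero [Fintype ι] {Ω : ι → ℝ} (hΩ : ∑ a, Ω a = 0) (y : ι → ℝ)
    (c : ℝ) : Ω ⬝ᵥ (y - Function.const ι c) = Ω ⬝ᵥ y := by
  simp only [dotProduct, Pi.sub_apply, Function.const_apply, mul_sub, Finset.sum_sub_distrib,
    ← Finset.sum_mul, hΩ, zero_mul, sub_zero]

theorem exists_isMaxOn_lipschitzSet [Fintype ι] {d : ι → ι → ℝ} (hd : ∀ a b, 0 ≤ d a b) {Ω : ι → ℝ}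
    (hΩ : ∑ a, Ω a = 0) (i₀ : ι) :
    ∃ ystar ∈ lipschitzSet d, ystar i₀ = 0 ∧ ∀ y ∈ lipschitzSet d, Ω ⬝ᵥ y ≤ Ω ⬝ᵥ ystar := by
  obtain ⟨ystar, ⟨hS, h₀⟩, hmax⟩ := (lipschitzSet.isCompact_inter_eval_eq_zero i₀).exists_isMaxOn
    ⟨0, lipschitzSet.zero_mem hd, rfl⟩ (continuous_const.dotProduct continuous_id).continuousOn
  refine ⟨ystar, hS, h₀, fun y hy => ?_⟩
  calc Ω ⬝ᵥ y = Ω ⬝ᵥ (y - Function.const ι (y i₀)) :=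
        (dotProduct_sub_const_of_sum_eq_zero hΩ y _).symm
    _ ≤ Ω ⬝ᵥ ystar := hmax ⟨lipschitzSet.sub_const_mem hy _, sub_self _⟩

theorem exists_mem_lipschitzSet_dotProduct_pos [Fintype ι] {d : ι → ι → ℝ} (hd : ∀ a b, 0 ≤ d a b)
    (hd_pos : ∀ a b, a ≠ b → 0 < d a b) {Ω : ι → ℝ} (hΩ : Ω ≠ 0) :
    ∃ y ∈ lipschitzSet d, 0 < Ω ⬝ᵥ y := by
  classical
  obtain ⟨δ, hδ, hδd⟩ := exists_pos_le_of_pos_of_ne hd_pos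
  obtain ⟨a₀, ha₀⟩ : ∃ a, Ω a ≠ 0 := Function.ne_iff.1 hΩ
  have hbump : ∀ c, |c| = δ → Pi.single a₀ c ∈ lipschitzSet d := fun c hc =>
    lipschitzSet.single_mem hd fun a b hab => hc ▸ hδd a b hab
  rcases ha₀.lt_or_gt with hneg | hpos
  · exact ⟨_, hbump (-δ) (by simp [hδ.le]), by rw [dotProduct_single]; nlinarith⟩
  · exact ⟨_, hbump δ (abs_of_pos hδ), by rw [dotProduct_single]; positivity⟩

/-- Finiteness, attainment and strict positivity of the lower bound in Theorem 1: for distinct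
points `v₁, …, vₙ` of `ℝ³` and reals `Ω₁, …, Ωₙ`, not all zero, with `Σₐ Ωₐ = 0`, the linear
functional `y ↦ Σₐ Ωₐ yₐ` attains its maximum over
`S = { y : |yₐ − y_b| ≤ ‖vₐ − v_b‖ for all a, b }` at some `y*` with `y*₁ = 0`, and the maximal
value is strictly positive. -/
theorem stmt6 {n : ℕ} (hn : 1 ≤ n) (v : Fin n → EuclideanSpace ℝ (Fin 3))
    (hv : Function.Injective v) (Ω : Fin n → ℝ) (hΩ : Ω ≠ 0)
    (hsum : ∑ a, Ω a = 0) :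
    ∃ ystar ∈ {y : Fin n → ℝ | ∀ a b, |y a - y b| ≤ ‖v a - v b‖},
      ystar ⟨0, hn⟩ = 0 ∧
        (∀ y ∈ {y : Fin n → ℝ | ∀ a b, |y a - y b| ≤ ‖v a - v b‖},
          ∑ a, Ω a * y a ≤ ∑ a, Ω a * ystar a) ∧
        0 < ∑ a, Ω a * ystar a := by
  have hd : ∀ a b, 0 ≤ ‖v a - v b‖ := fun _ _ => norm_nonneg _
  have hd_pos : ∀ a b, a ≠ b → 0 < ‖v a - v b‖ := fun _ _ hab =>
    norm_pos_iff.2 (sub_ne_zero.2 (hv.ne hab))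
  obtain ⟨ystar, hS, h₀, hmax⟩ := exists_isMaxOn_lipschitzSet hd hsum ⟨0, hn⟩
  obtain ⟨y, hy, hpos⟩ := exists_mem_lipschitzSet_dotProduct_pos hd hd_pos hΩ
  exact ⟨ystar, hS, h₀, hmax, hpos.trans_le (hmax y hy)⟩
end

section
/- Let M > 0 and let D ⊆ ℝ² be an open set with |u| ≤ M and |v| ≤ M for all (u,v) ∈ D. Let s : ℝ → ℝ be a C¹ function with s([0,1]) ⊆ [1/2, 1], s(h) = h for h ∈ [3/4, 1], and c ≤ s′(h) ≤ B on [0,1] for constants 0 < c ≤ B. Then there exists a constant C > 0, depending only on M, c, and B, such that for every C¹ map φ : D × [1/2, 1] → ℝ³, the map φ̂(u,v,h) := φ(u,v,s(h)) on D × (0, 1] satisfies ∫_{D×(0,1]} ( ‖φ̂_u‖² + ‖φ̂_v‖² + ‖−u φ̂_u − v φ̂_v + h φ̂_h‖² ) du dv dh ≤ C ∫_{D×[1/2,1]} ( ‖φ_u‖² + ‖φ_v‖² + ‖−u φ_u − v φ_v + h φ_h‖² ) du dv dh. -/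
/-!
Write `σ = s h` and `d = s' h`. By the chain rule `φ̂` has the same `u`- and `v`-derivatives as
`φ` at `(u, v, σ)` and `h`-derivative `d φ_h`, so with `r = h d / σ ∈ [0, 2B]` the radial term of
`φ̂` is `r X + (r - 1)(u φ_u + v φ_v)`, where `X = -u φ_u - v φ_v + σ φ_h` is the radial term of
`φ`.
Hence the energy density of `φ̂` at height `h` is at most a constant `K(M, B)` times that of `φ`
at height `σ`, and `K ≤ (K / c) s'(h)`. Integrating in `h` and substituting `y = s h`, which maps
`(0, 1]` into `[1/2, 1]`, gives the bound with `C = K / c`; Fubini handles the `(u, v)` variables.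
-/

open MeasureTheory

/-- The cone energy density of a map `g(u, v, h)` with values in `ℝ³`:
`‖g_u‖² + ‖g_v‖² + ‖−u g_u − v g_v + h g_h‖²`. -/
noncomputable def coneDensity (g : (ℝ × ℝ) × ℝ → EuclideanSpace ℝ (Fin 3))
    (p : (ℝ × ℝ) × ℝ) : ℝ :=
  ‖fderiv ℝ g p ((1, 0), 0)‖ ^ 2 + ‖fderiv ℝ g p ((0, 1), 0)‖ ^ 2 +
    ‖(-p.1.1) • fderiv ℝ g p ((1, 0), 0) + (-p.1.2) • fderiv ℝ g p ((0, 1), 0)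
        + p.2 • fderiv ℝ g p ((0, 0), 1)‖ ^ 2

open Set

section Rescale

variable {E : Type*} [NormedAddCommGroup E] [NormedSpace ℝ E]

theorem coneEnergy_rescale_le (a b w : E) {u v σ r M R : ℝ} (hu : |u| ≤ M) (hv : |v| ≤ M)
    (hr₀ : 0 ≤ r) (hrR : r ≤ R) :
    ‖a‖ ^ 2 + ‖b‖ ^ 2 + ‖(-u) • a + (-v) • b + (r * σ) • w‖ ^ 2 ≤
      (1 + 3 * ((R + 1) * (M + 1)) ^ 2) *
        (‖a‖ ^ 2 + ‖b‖ ^ 2 + ‖(-u) • a + (-v) • b + σ • w‖ ^ 2) := by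
  set X := (-u) • a + (-v) • b + σ • w
  have hM : 0 ≤ M := (abs_nonneg u).trans hu
  have hr₁ : |r - 1| ≤ R + 1 := abs_le.mpr ⟨by linarith, by linarith⟩
  have hsplit : (-u) • a + (-v) • b + (r * σ) • w =
      r • X + ((r - 1) * u) • a + ((r - 1) * v) • b := by
    simp only [X]; module
  have hnorm : ‖(-u) • a + (-v) • b + (r * σ) • w‖ ≤
      R * ‖X‖ + (R + 1) * M * ‖a‖ + (R + 1) * M * ‖b‖ := by
    rw [hsplit]
    refine norm_add₃_le.trans (add_le_add_three ?_ ?_ ?_) <;>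
      simp only [norm_smul, Real.norm_eq_abs, abs_mul]
    · exact mul_le_mul_of_nonneg_right ((abs_of_nonneg hr₀).trans_le hrR) (norm_nonneg _)
    · exact mul_le_mul_of_nonneg_right (mul_le_mul hr₁ hu (abs_nonneg _) (by linarith))
        (norm_nonneg _)
    · exact mul_le_mul_of_nonneg_right (mul_le_mul hr₁ hv (abs_nonneg _) (by linarith))
        (norm_nonneg _)
  have hR : R ^ 2 ≤ ((R + 1) * (M + 1)) ^ 2 := by gcongr <;> nlinarith
  have hRM : ((R + 1) * M) ^ 2 ≤ ((R + 1) * (M + 1)) ^ 2 := by gcongr <;> nlinarith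
  calc ‖a‖ ^ 2 + ‖b‖ ^ 2 + ‖(-u) • a + (-v) • b + (r * σ) • w‖ ^ 2
      ≤ ‖a‖ ^ 2 + ‖b‖ ^ 2 + (R * ‖X‖ + (R + 1) * M * ‖a‖ + (R + 1) * M * ‖b‖) ^ 2 := by
        gcongr
    _ ≤ ‖a‖ ^ 2 + ‖b‖ ^ 2 +
          3 * (R ^ 2 * ‖X‖ ^ 2 + ((R + 1) * M) ^ 2 * ‖a‖ ^ 2 + ((R + 1) * M) ^ 2 * ‖b‖ ^ 2) := by
        nlinarith [sq_nonneg (R * ‖X‖ - (R + 1) * M * ‖a‖),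
          sq_nonneg (R * ‖X‖ - (R + 1) * M * ‖b‖),
          sq_nonneg ((R + 1) * M * ‖a‖ - (R + 1) * M * ‖b‖)]
    _ ≤ _ := by
        nlinarith [mul_le_mul_of_nonneg_right hR (sq_nonneg ‖X‖),
          mul_le_mul_of_nonneg_right hRM (sq_nonneg ‖a‖),
          mul_le_mul_of_nonneg_right hRM (sq_nonneg ‖b‖)]

end Rescale

section ChainRule

variable {E F : Type*} [NormedAddCommGroup E] [NormedSpace ℝ E] [NormedAddCommGroup F]
  [NormedSpace ℝ F]

theorem fderiv_comp_reparam_apply {φ : E × ℝ → F} {s : ℝ → ℝ} {x : E} {h : ℝ}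
    (hφ : DifferentiableAt ℝ φ (x, s h)) (hs : DifferentiableAt ℝ s h) (y : E) (k : ℝ) :
    fderiv ℝ (fun q : E × ℝ => φ (q.1, s q.2)) (x, h) (y, k) =
      fderiv ℝ φ (x, s h) (y, deriv s h * k) := by
  have hmap : HasFDerivAt (fun q : E × ℝ => (q.1, s q.2))
      ((ContinuousLinearMap.fst ℝ E ℝ).prod (deriv s h • ContinuousLinearMap.snd ℝ E ℝ)) (x, h) :=
    hasFDerivAt_fst.prodMk (hs.hasDerivAt.comp_hasFDerivAt (x, h) hasFDerivAt_snd)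
  have hcomp : HasFDerivAt (fun q : E × ℝ => φ (q.1, s q.2)) _ (x, h) :=
    hφ.hasFDerivAt.comp (x, h) hmap
  rw [hcomp.fderiv]
  rfl

end ChainRule

theorem setIntegral_deriv_mul_comp_le {g s : ℝ → ℝ} {α β a b : ℝ} (hαβ : α ≤ β)
    (hg : Continuous g) (hg₀ : ∀ y, 0 ≤ g y) (hs : ContDiff ℝ 1 s) (ha : a ≤ s α)
    (hsαβ : s α ≤ s β) (hb : s β ≤ b) :
    ∫ h in Ioc α β, deriv s h * g (s h) ≤ ∫ y in Icc a b, g y := by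
  have hsubst : ∫ h in α..β, deriv s h * g (s h) = ∫ y in s α..s β, g y := by
    simpa only [smul_eq_mul, Function.comp] using intervalIntegral.integral_deriv_smul_comp
      (fun x _ => (hs.differentiable one_ne_zero x).hasDerivAt)
      (hs.continuous_deriv le_rfl).continuousOn hg
  rw [← intervalIntegral.integral_of_le hαβ, hsubst, intervalIntegral.integral_of_le hsαβ]
  have hsub : Ioc (s α) (s β) ⊆ Icc a b := fun y hy => ⟨ha.trans hy.1.le, hy.2.trans hb⟩
  exact setIntegral_mono_set hg.integrableOn_Icc (.of_forall hg₀) hsub.eventuallyLE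

theorem setIntegral_le_of_le_comp {F g s : ℝ → ℝ} {α β a b c K : ℝ} (hαβ : α ≤ β)
    (hF : Continuous F) (hg : Continuous g) (hg₀ : ∀ y, 0 ≤ g y) (hs : ContDiff ℝ 1 s)
    (ha : a ≤ s α) (hsαβ : s α ≤ s β) (hb : s β ≤ b) (hc : 0 < c) (hK : 0 ≤ K)
    (hcs : ∀ h ∈ Icc α β, c ≤ deriv s h) (hFg : ∀ h ∈ Icc α β, F h ≤ K * g (s h)) :
    ∫ h in Ioc α β, F h ≤ K / c * ∫ y in Icc a b, g y := by
  have hcont : Continuous fun h => K / c * (deriv s h * g (s h)) :=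
    continuous_const.mul ((hs.continuous_deriv le_rfl).mul (hg.comp hs.continuous))
  calc ∫ h in Ioc α β, F h ≤ ∫ h in Ioc α β, K / c * (deriv s h * g (s h)) := by
        refine setIntegral_mono_on hF.integrableOn_Ioc hcont.integrableOn_Ioc measurableSet_Ioc
          fun h hh => ?_
        calc F h ≤ K * g (s h) := hFg h (Ioc_subset_Icc_self hh)
          _ = K / c * (c * g (s h)) := by field_simp
          _ ≤ K / c * (deriv s h * g (s h)) := by
            gcongr
            exacts [hg₀ _, hcs h (Ioc_subset_Icc_self hh)]
    _ ≤ K / c * ∫ y in Icc a b, g y := by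
        rw [integral_const_mul]
        gcongr
        exact setIntegral_deriv_mul_comp_le hαβ hg hg₀ hs ha hsαβ hb

theorem setIntegral_prod_le_of_forall {α β : Type*} [MeasurableSpace α] [MeasurableSpace β]
    {μ : Measure α} {ν : Measure β} [SFinite μ] [SFinite ν] {f g : α × β → ℝ} {s : Set α}
    {t t' : Set β} (hs : MeasurableSet s) (hf : IntegrableOn f (s ×ˢ t) (μ.prod ν))
    (hg : IntegrableOn g (s ×ˢ t') (μ.prod ν))
    (hfg : ∀ x ∈ s, ∫ y in t, f (x, y) ∂ν ≤ ∫ y in t', g (x, y) ∂ν) :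
    ∫ p in s ×ˢ t, f p ∂(μ.prod ν) ≤ ∫ p in s ×ˢ t', g p ∂(μ.prod ν) := by
  rw [setIntegral_prod _ hf, setIntegral_prod _ hg]
  rw [IntegrableOn, ← Measure.prod_restrict] at hf hg
  exact setIntegral_mono_on hf.integral_prod_left hg.integral_prod_left hs hfg

theorem coneDensity_nonneg (g : (ℝ × ℝ) × ℝ → EuclideanSpace ℝ (Fin 3)) (p : (ℝ × ℝ) × ℝ) :
    0 ≤ coneDensity g p := by
  unfold coneDensity; positivity

theorem coneDensity_continuous {g : (ℝ × ℝ) × ℝ → EuclideanSpace ℝ (Fin 3)}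
    (hg : ContDiff ℝ 1 g) : Continuous (coneDensity g) := by
  have hdir : ∀ X : (ℝ × ℝ) × ℝ, Continuous fun p => fderiv ℝ g p X := fun X =>
    (hg.continuous_fderiv one_ne_zero).clm_apply continuous_const
  unfold coneDensity
  fun_prop

theorem integrableOn_coneDensity_prod {g : (ℝ × ℝ) × ℝ → EuclideanSpace ℝ (Fin 3)}
    (hg : ContDiff ℝ 1 g) {D : Set (ℝ × ℝ)} {M a b : ℝ} (hD : ∀ p ∈ D, |p.1| ≤ M ∧ |p.2| ≤ M)
    {t : Set ℝ} (ht : t ⊆ Icc a b) : IntegrableOn (coneDensity g) (D ×ˢ t) :=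
  ((coneDensity_continuous hg).continuousOn.integrableOn_compact
    ((isCompact_closedBall (0 : ℝ × ℝ) M).prod isCompact_Icc)).mono_set
    (prod_mono (fun p hp => by simpa [Prod.norm_def] using hD p hp) ht)

theorem coneDensity_comp_reparam_le {φ : (ℝ × ℝ) × ℝ → EuclideanSpace ℝ (Fin 3)} {s : ℝ → ℝ}
    {u v h M R : ℝ} (hφ : DifferentiableAt ℝ φ ((u, v), s h)) (hs : DifferentiableAt ℝ s h)
    (hu : |u| ≤ M) (hv : |v| ≤ M) (hσ : 0 < s h) (hd₀ : 0 ≤ h * deriv s h)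
    (hdR : h * deriv s h ≤ R * s h) :
    coneDensity (fun q => φ (q.1, s q.2)) ((u, v), h) ≤
      (1 + 3 * ((R + 1) * (M + 1)) ^ 2) * coneDensity φ ((u, v), s h) := by
  set r := h * deriv s h / s h
  have hw : h • fderiv ℝ φ ((u, v), s h) ((0, 0), deriv s h * 1) =
      (r * s h) • fderiv ℝ φ ((u, v), s h) ((0, 0), 1) := by
    rw [div_mul_cancel₀ _ hσ.ne', ← map_smul, ← map_smul]
    congr 1
    ext <;> simp
  simp only [coneDensity, fderiv_comp_reparam_apply hφ hs, mul_zero, hw]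
  exact coneEnergy_rescale_le _ _ _ hu hv (by positivity) ((div_le_iff₀ hσ).mpr hdR)

theorem stmt9_general (M c B : ℝ) (hc : 0 < c) :
    ∃ C > 0, ∀ D : Set (ℝ × ℝ), IsOpen D → (∀ p ∈ D, |p.1| ≤ M ∧ |p.2| ≤ M) →
      ∀ s : ℝ → ℝ, ContDiff ℝ 1 s →
        (∀ h ∈ Set.Icc (0 : ℝ) 1, s h ∈ Set.Icc (1 / 2 : ℝ) 1) →
        (∀ h ∈ Set.Icc (3 / 4 : ℝ) 1, s h = h) →
        (∀ h ∈ Set.Icc (0 : ℝ) 1, c ≤ deriv s h ∧ deriv s h ≤ B) →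
        ∀ φ : (ℝ × ℝ) × ℝ → EuclideanSpace ℝ (Fin 3), ContDiff ℝ 1 φ →
          (∫ p in D ×ˢ Set.Ioc (0 : ℝ) 1, coneDensity (fun q => φ (q.1, s q.2)) p)
            ≤ C * ∫ p in D ×ˢ Set.Icc (1 / 2 : ℝ) 1, coneDensity φ p := by
  refine ⟨(1 + 3 * ((2 * B + 1) * (M + 1)) ^ 2) / c, by positivity, ?_⟩
  intro D hD hDM s hs hsmem hsid hsder φ hφ
  have hψ : ContDiff ℝ 1 fun q : (ℝ × ℝ) × ℝ => φ (q.1, s q.2) :=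
    hφ.comp (contDiff_fst.prodMk (hs.comp contDiff_snd))
  rw [← integral_const_mul]
  refine setIntegral_prod_le_of_forall hD.measurableSet
    (integrableOn_coneDensity_prod hψ hDM Ioc_subset_Icc_self)
    ((integrableOn_coneDensity_prod hφ hDM subset_rfl).const_mul _) fun x hx => ?_
  obtain ⟨u, v⟩ := x
  obtain ⟨hu, hv⟩ := hDM _ hx
  have hs1 : s 1 = 1 := hsid 1 (by norm_num)
  have hs0 := hsmem 0 (by norm_num)
  rw [integral_const_mul]
  refine setIntegral_le_of_le_comp zero_le_one
    ((coneDensity_continuous hψ).comp (Continuous.prodMk_right (u, v)))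
    ((coneDensity_continuous hφ).comp (Continuous.prodMk_right (u, v)))
    (fun _ => coneDensity_nonneg _ _) hs hs0.1 (hs0.2.trans_eq hs1.symm) hs1.le hc (by positivity)
    (fun h hh => (hsder h hh).1) fun h hh => ?_
  obtain ⟨hσ, -⟩ := hsmem h hh
  obtain ⟨hcd, hdB⟩ := hsder h hh
  exact coneDensity_comp_reparam_le (hφ.differentiable one_ne_zero _)
    (hs.differentiable one_ne_zero _) hu hv (by linarith) (by nlinarith [hh.1])
    (by nlinarith [hh.1, hh.2])

/-- The analytic core of Lemma 1 (vertex extension): extending a map from the outer half of the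
cone `D × [1/2, 1]` to `D × (0, 1]` by the reparametrization `h ↦ s(h)` (where `s` maps `[0,1]`
into `[1/2,1]`, equals the identity on `[3/4,1]`, and has `c ≤ s′ ≤ B`) increases the cone energy
by at most a factor `C` depending only on `M`, `c` and `B`. -/
theorem stmt9 (M c B : ℝ) (hM : 0 < M) (hc : 0 < c) (hcB : c ≤ B) :
    ∃ C > 0, ∀ D : Set (ℝ × ℝ), IsOpen D → (∀ p ∈ D, |p.1| ≤ M ∧ |p.2| ≤ M) →
      ∀ s : ℝ → ℝ, ContDiff ℝ 1 s →
        (∀ h ∈ Set.Icc (0 : ℝ) 1, s h ∈ Set.Icc (1 / 2 : ℝ) 1) →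
        (∀ h ∈ Set.Icc (3 / 4 : ℝ) 1, s h = h) →
        (∀ h ∈ Set.Icc (0 : ℝ) 1, c ≤ deriv s h ∧ deriv s h ≤ B) →
        ∀ φ : (ℝ × ℝ) × ℝ → EuclideanSpace ℝ (Fin 3), ContDiff ℝ 1 φ →
          (∫ p in D ×ˢ Set.Ioc (0 : ℝ) 1, coneDensity (fun q => φ (q.1, s q.2)) p)
            ≤ C * ∫ p in D ×ˢ Set.Icc (1 / 2 : ℝ) 1, coneDensity φ p :=
  stmt9_general M c B hc
end

section
/- Let 0 < ε ≤ 1/2. Let p : ℝ → ℝ² be a C¹ map with ‖p(t)‖ ≤ ε for all t, and set p∥(t) = √(1 − ‖p(t)‖²). Let ψ : ℝ → [0, 1] and s : ℝ → ℝ be C¹ functions. Define q(t) = (1 − ψ(t))·p(s(t)) and q∥(t) = √(1 − ‖q(t)‖²). Then q∥ is C¹ and for every t, ‖q′(t)‖² + (q∥′(t))² ≤ 4 (ψ′(t))² ε² + 2 (s′(t))² ( ‖p′(s(t))‖² + (p∥′(s(t)))² ). -/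
/-!
A curve `g` in the unit ball lifts to the unit sphere as `(g, √(1 - ‖g‖²))`, and the squared speed
of the lift, `‖g'‖² + ⟪g, g'⟫² / (1 - ‖g‖²)`, is a positive semidefinite quadratic form in `g'`.
Hence for `q′ = (1 - ψ) s′ p′(s) - ψ′ p(s)` it is at most twice the sum of the values on the two
terms. Damping by `1 - ψ ∈ [0, 1]` does not increase the form, which bounds the first term by
`s′²` times the squared speed of the lift of `p`; the second term is radial and of size
`ψ′² ‖p‖² / (1 - ‖q‖²) ≤ 4/3 ψ′² ε²` because `‖q‖ ≤ ε ≤ 1/2`.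
-/

section SphereLift

open scoped RealInnerProductSpace

theorem one_sub_norm_sq_pos {E : Type*} [SeminormedAddCommGroup E] {x : E} (hx : ‖x‖ < 1) :
    0 < 1 - ‖x‖ ^ 2 := by
  nlinarith [norm_nonneg x]

variable {E : Type*} [NormedAddCommGroup E] [InnerProductSpace ℝ E]

/-- The squared norm of the differential at `x` of `x ↦ (x, √(1 - ‖x‖²))`, applied to `v`. -/
noncomputable def sphereLiftSpeedSq (x v : E) : ℝ :=
  ‖v‖ ^ 2 + ⟪x, v⟫ ^ 2 / (1 - ‖x‖ ^ 2)

theorem HasDerivAt.sqrt_one_sub_norm_sq {g : ℝ → E} {g' : E} {t : ℝ} (hg : HasDerivAt g g' t)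
    (ht : ‖g t‖ < 1) :
    HasDerivAt (fun t => √(1 - ‖g t‖ ^ 2)) (-⟪g t, g'⟫ / √(1 - ‖g t‖ ^ 2)) t := by
  have hpos := one_sub_norm_sq_pos ht
  convert (hg.norm_sq.const_sub 1).sqrt hpos.ne' using 1
  field_simp [(Real.sqrt_pos.2 hpos).ne']

theorem norm_sq_add_deriv_sqrt_one_sub_norm_sq_sq {g : ℝ → E} {t : ℝ}
    (hg : DifferentiableAt ℝ g t) (ht : ‖g t‖ < 1) :
    ‖deriv g t‖ ^ 2 + deriv (fun t => √(1 - ‖g t‖ ^ 2)) t ^ 2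
      = sphereLiftSpeedSq (g t) (deriv g t) := by
  rw [(hg.hasDerivAt.sqrt_one_sub_norm_sq ht).deriv, div_pow,
    Real.sq_sqrt (one_sub_norm_sq_pos ht).le, neg_sq,
    sphereLiftSpeedSq]

theorem contDiff_sqrt_one_sub_norm_sq {F : Type*} [NormedAddCommGroup F] [NormedSpace ℝ F]
    {n : WithTop ℕ∞} {g : F → E} (hg : ContDiff ℝ n g) (h : ∀ y, ‖g y‖ < 1) :
    ContDiff ℝ n fun y => √(1 - ‖g y‖ ^ 2) :=
  (contDiff_const.sub (hg.norm_sq ℝ)).sqrt fun y => (one_sub_norm_sq_pos (h y)).ne'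

theorem sphereLiftSpeedSq_smul_right (x v : E) (c : ℝ) :
    sphereLiftSpeedSq x (c • v) = c ^ 2 * sphereLiftSpeedSq x v := by
  simp only [sphereLiftSpeedSq, norm_smul, real_inner_smul_right, Real.norm_eq_abs, mul_pow,
    sq_abs]
  ring

theorem sphereLiftSpeedSq_add_le {x : E} (hx : ‖x‖ < 1) (v w : E) :
    sphereLiftSpeedSq x (v + w) ≤ 2 * sphereLiftSpeedSq x v + 2 * sphereLiftSpeedSq x w := by
  have hnorm : ‖v + w‖ ^ 2 ≤ 2 * ‖v‖ ^ 2 + 2 * ‖w‖ ^ 2 := by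
    nlinarith [norm_add_le v w, norm_nonneg (v + w), sq_nonneg (‖v‖ - ‖w‖)]
  have hinner : ⟪x, v + w⟫ ^ 2 ≤ 2 * ⟪x, v⟫ ^ 2 + 2 * ⟪x, w⟫ ^ 2 := by
    rw [inner_add_right]
    nlinarith [sq_nonneg (⟪x, v⟫ - ⟪x, w⟫)]
  have hdiv := div_le_div_of_nonneg_right hinner (one_sub_norm_sq_pos hx).le
  simp only [sphereLiftSpeedSq, add_div, mul_div_assoc] at hdiv ⊢
  linarith

theorem sphereLiftSpeedSq_smul_le {a : ℝ} (ha : |a| ≤ 1) {x : E} (hx : ‖x‖ < 1) (v : E) :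
    sphereLiftSpeedSq (a • x) (a • v) ≤ sphereLiftSpeedSq x v := by
  have ha2 : a ^ 2 ≤ 1 := (sq_le_one_iff_abs_le_one a).2 ha
  have hden : 1 - ‖x‖ ^ 2 ≤ 1 - a ^ 2 * ‖x‖ ^ 2 := by nlinarith [sq_nonneg ‖x‖]
  have hnum : a ^ 2 * (a ^ 2 * ⟪x, v⟫ ^ 2) ≤ ⟪x, v⟫ ^ 2 := by
    rw [← mul_assoc]
    exact mul_le_of_le_one_left (sq_nonneg _) (mul_le_one₀ ha2 (sq_nonneg a) ha2)
  simp only [sphereLiftSpeedSq, norm_smul, real_inner_smul_left, real_inner_smul_right,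
    Real.norm_eq_abs, mul_pow, sq_abs]
  gcongr ?_ + ?_
  · exact mul_le_of_le_one_left (sq_nonneg _) ha2
  · gcongr
    exact one_sub_norm_sq_pos hx

theorem sphereLiftSpeedSq_smul_smul_le {a ε : ℝ} (ha : |a| ≤ 1) (hε : ε ≤ 1 / 2) {x : E}
    (hx : ‖x‖ ≤ ε) (b : ℝ) :
    sphereLiftSpeedSq (a • x) (b • x) ≤ 2 * b ^ 2 * ε ^ 2 := by
  have ha2 : a ^ 2 ≤ 1 := (sq_le_one_iff_abs_le_one a).2 ha
  have hx2 : ‖x‖ ^ 2 ≤ ε ^ 2 := pow_le_pow_left₀ (norm_nonneg x) hx 2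
  have hε2 : ε ^ 2 ≤ 1 / 4 := by nlinarith [norm_nonneg x]
  have hden : 3 / 4 ≤ 1 - a ^ 2 * ‖x‖ ^ 2 := by nlinarith [sq_nonneg ‖x‖]
  have hradial : sphereLiftSpeedSq (a • x) (b • x) = b ^ 2 * ‖x‖ ^ 2 / (1 - a ^ 2 * ‖x‖ ^ 2) := by
    rw [eq_div_iff (by linarith)]
    simp only [sphereLiftSpeedSq, norm_smul, real_inner_smul_left, real_inner_smul_right,
      real_inner_self_eq_norm_sq, Real.norm_eq_abs, mul_pow, sq_abs]
    rw [add_mul, div_mul_cancel₀ _ (by linarith)]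
    ring
  rw [hradial, div_le_iff₀ (by linarith)]
  nlinarith [mul_le_mul_of_nonneg_left hx2 (sq_nonneg b), sq_nonneg (b * ε)]

end SphereLift

theorem stmt10_general (ε : ℝ) (hε' : ε ≤ 1 / 2)
    (p : ℝ → EuclideanSpace ℝ (Fin 2)) (hp : ContDiff ℝ 1 p)
    (hpε : ∀ t, ‖p t‖ ≤ ε)
    (ψ : ℝ → ℝ) (hψ : ContDiff ℝ 1 ψ) (hψ01 : ∀ t, ψ t ∈ Set.Icc (0 : ℝ) 1)
    (s : ℝ → ℝ) (hs : ContDiff ℝ 1 s) :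
    ContDiff ℝ 1 (fun t => Real.sqrt (1 - ‖(1 - ψ t) • p (s t)‖ ^ 2)) ∧
      ∀ t,
        ‖deriv (fun t' => (1 - ψ t') • p (s t')) t‖ ^ 2
            + (deriv (fun t' => Real.sqrt (1 - ‖(1 - ψ t') • p (s t')‖ ^ 2)) t) ^ 2
          ≤ 4 * (deriv ψ t) ^ 2 * ε ^ 2
            + 2 * (deriv s t) ^ 2 *
              (‖deriv p (s t)‖ ^ 2
                + (deriv (fun x => Real.sqrt (1 - ‖p x‖ ^ 2)) (s t)) ^ 2) := by
  have hdamp : ∀ t, |1 - ψ t| ≤ 1 := fun t ↦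
    abs_le.2 ⟨by linarith [(hψ01 t).2], by linarith [(hψ01 t).1]⟩
  have hqε : ∀ t, ‖(1 - ψ t) • p (s t)‖ ≤ ε := fun t ↦ by
    rw [norm_smul, Real.norm_eq_abs]
    exact (mul_le_of_le_one_left (norm_nonneg _) (hdamp t)).trans (hpε _)
  have hq_lt : ∀ t, ‖(1 - ψ t) • p (s t)‖ < 1 := fun t ↦ by linarith [hqε t]
  have hp_lt : ∀ x, ‖p x‖ < 1 := fun x ↦ by linarith [hpε x]
  have hq : ContDiff ℝ 1 fun t => (1 - ψ t) • p (s t) :=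
    (contDiff_const.sub hψ).smul (hp.comp hs)
  refine ⟨contDiff_sqrt_one_sub_norm_sq hq hq_lt, fun t ↦ ?_⟩
  have hq' : HasDerivAt (fun t => (1 - ψ t) • p (s t))
      ((1 - ψ t) • (deriv s t • deriv p (s t)) + (-deriv ψ t) • p (s t)) t :=
    ((hψ.differentiable one_ne_zero t).hasDerivAt.const_sub 1).smul
      ((hp.differentiable one_ne_zero (s t)).hasDerivAt.scomp t
        (hs.differentiable one_ne_zero t).hasDerivAt)
  rw [norm_sq_add_deriv_sqrt_one_sub_norm_sq_sq (hq.differentiable one_ne_zero t) (hq_lt t),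
    norm_sq_add_deriv_sqrt_one_sub_norm_sq_sq (hp.differentiable one_ne_zero (s t)) (hp_lt _),
    hq'.deriv]
  calc _ ≤ 2 * sphereLiftSpeedSq ((1 - ψ t) • p (s t)) ((1 - ψ t) • (deriv s t • deriv p (s t)))
        + 2 * sphereLiftSpeedSq ((1 - ψ t) • p (s t)) ((-deriv ψ t) • p (s t)) :=
        sphereLiftSpeedSq_add_le (hq_lt t) _ _
    _ ≤ 2 * sphereLiftSpeedSq (p (s t)) (deriv s t • deriv p (s t))
        + 2 * (2 * (-deriv ψ t) ^ 2 * ε ^ 2) := by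
        gcongr
        · exact sphereLiftSpeedSq_smul_le (hdamp t) (hp_lt _) _
        · exact sphereLiftSpeedSq_smul_smul_le (hdamp t) hε' (hpε _) _
    _ = _ := by rw [sphereLiftSpeedSq_smul_right]; ring

/-- Pointwise derivative estimate at the heart of Lemma 2 (edge extension): given a `C¹` curve
`p` in `ℝ²` with `‖p‖ ≤ ε ≤ 1/2`, its parallel part `p∥ = √(1 − ‖p‖²)`, a `C¹` cutoff
`ψ : ℝ → [0,1]` and a `C¹` reparametrization `s`, the damped reparametrized curve
`q(t) = (1 − ψ(t))·p(s(t))` with parallel part `q∥ = √(1 − ‖q‖²)` satisfies: `q∥` is `C¹` and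
`‖q′‖² + (q∥′)² ≤ 4ψ′²ε² + 2s′²(‖p′∘s‖² + (p∥′∘s)²)` pointwise. -/
theorem stmt10 (ε : ℝ) (hε : 0 < ε) (hε' : ε ≤ 1 / 2)
    (p : ℝ → EuclideanSpace ℝ (Fin 2)) (hp : ContDiff ℝ 1 p)
    (hpε : ∀ t, ‖p t‖ ≤ ε)
    (ψ : ℝ → ℝ) (hψ : ContDiff ℝ 1 ψ) (hψ01 : ∀ t, ψ t ∈ Set.Icc (0 : ℝ) 1)
    (s : ℝ → ℝ) (hs : ContDiff ℝ 1 s) :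
    ContDiff ℝ 1 (fun t => Real.sqrt (1 - ‖(1 - ψ t) • p (s t)‖ ^ 2)) ∧
      ∀ t,
        ‖deriv (fun t' => (1 - ψ t') • p (s t')) t‖ ^ 2
            + (deriv (fun t' => Real.sqrt (1 - ‖(1 - ψ t') • p (s t')‖ ^ 2)) t) ^ 2
          ≤ 4 * (deriv ψ t) ^ 2 * ε ^ 2
            + 2 * (deriv s t) ^ 2 *
              (‖deriv p (s t)‖ ^ 2
                + (deriv (fun x => Real.sqrt (1 - ‖p x‖ ^ 2)) (s t)) ^ 2) :=
  stmt10_general ε hε' p hp hpε ψ hψ hψ01 s hs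
end
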